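/- arXiv:1303.4082 — 8 statements merged into one kernel-verified Lean document; each statement's English description precedes it below -/
import Mathlib

section
/- Under the assumptions of the coercivity lemma (δ² > 0, μ > r, L > θ = (μ−r)/δ), the function h(π) = L·√(|πσ − z|² + Σᵢ|πγᵢ − uᵢ|²λᵢ) − π(μ − r) attains its minimum over ℝ at the unique point π₁* = (zσ + Σᵢuᵢγᵢλᵢ)/δ² + ((μ−r)/(δ²·√(L² − (μ−r)²/δ²)))·√(z² + Σᵢuᵢ²λᵢ − (zσ + Σᵢuᵢγᵢλᵢ)²/δ²), provided z² + Σᵢuᵢ²λᵢ − (zσ + Σᵢuᵢγᵢλᵢ)²/δ² > 0. -/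
/-!
After completing the square, `(πσ - z)² + ∑ᵢ (πγᵢ - uᵢ)² λᵢ = δ² (π - a/δ²)² + R` with
`a = zσ + ∑ᵢ uᵢγᵢλᵢ` and `R > 0`, so up to a shift and a constant `h` is
`f s = L √(δ² s² + R) - k s` with `k = μ - r`. This `f` is strictly convex, and its critical point
`t₀` is characterised by `k √(δ² t₀² + R) = L δ² t₀`; at such a point `f s - f t₀` equals
`L / √(δ² t₀² + R)` times the Cauchy–Schwarz defect `√(δ² s² + R) √(δ² t₀² + R) - (R + δ² t₀ s)`,
which is positive for `s ≠ t₀`. Solving the critical-point equation gives `π₁* - a/δ² = t₀`.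
-/

theorem sq_add_sum_sq_mul_eq_quadratic {ι : Type*} [Fintype ι] (x σ z : ℝ) (γ u lam : ι → ℝ) :
    (x * σ - z) ^ 2 + ∑ i, (x * γ i - u i) ^ 2 * lam i
      = (σ ^ 2 + ∑ i, γ i ^ 2 * lam i) * x ^ 2 - 2 * (z * σ + ∑ i, u i * γ i * lam i) * x
        + (z ^ 2 + ∑ i, u i ^ 2 * lam i) := by
  have hsum : ∑ i, (x * γ i - u i) ^ 2 * lam i
      = (∑ i, γ i ^ 2 * lam i) * x ^ 2 - 2 * (∑ i, u i * γ i * lam i) * x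
        + ∑ i, u i ^ 2 * lam i := by
    simp only [Finset.sum_mul, Finset.mul_sum, ← Finset.sum_sub_distrib, ← Finset.sum_add_distrib]
    exact Finset.sum_congr rfl fun i _ => by ring
  rw [hsum]
  ring

theorem quadratic_eq_complete_square {b : ℝ} (hb : b ≠ 0) (a c x : ℝ) :
    b * x ^ 2 - 2 * a * x + c = b * (x - a / b) ^ 2 + (c - a ^ 2 / b) := by
  field_simp
  ring

theorem add_mul_lt_sqrt_mul_sqrt {b R : ℝ} (hb : 0 < b) (hR : 0 < R) {s t : ℝ} (hst : s ≠ t) :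
    R + b * t * s < √(b * s ^ 2 + R) * √(b * t ^ 2 + R) := by
  rw [← Real.sqrt_mul (by positivity)]
  refine Real.lt_sqrt_of_sq_lt ?_
  have : 0 < b * R * (s - t) ^ 2 := by
    have := sub_ne_zero.mpr hst
    positivity
  nlinarith

theorem sqrt_quadratic_sub_linear_lt_of_crit {b R L k t₀ : ℝ} (hb : 0 < b) (hR : 0 < R)
    (hL : 0 < L) (hcrit : k * √(b * t₀ ^ 2 + R) = L * (b * t₀)) {s : ℝ} (hs : s ≠ t₀) :
    L * √(b * t₀ ^ 2 + R) - k * t₀ < L * √(b * s ^ 2 + R) - k * s := by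
  have hQ₀ : 0 < b * t₀ ^ 2 + R := by positivity
  have hD₀ : 0 < √(b * t₀ ^ 2 + R) := Real.sqrt_pos.mpr hQ₀
  have hgap : L * √(b * s ^ 2 + R) - k * s - (L * √(b * t₀ ^ 2 + R) - k * t₀)
      = L / √(b * t₀ ^ 2 + R)
        * (√(b * s ^ 2 + R) * √(b * t₀ ^ 2 + R) - (R + b * t₀ * s)) := by
    field_simp
    linear_combination (t₀ - s) * hcrit - L * Real.sq_sqrt hQ₀.le
  have hpos : 0 < L / √(b * t₀ ^ 2 + R)
      * (√(b * s ^ 2 + R) * √(b * t₀ ^ 2 + R) - (R + b * t₀ * s)) :=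
    mul_pos (div_pos hL hD₀) (sub_pos.mpr (add_mul_lt_sqrt_mul_sqrt hb hR hs))
  linarith

theorem mul_sqrt_quadratic_eq_at_crit {b R L k : ℝ} (hb : 0 < b) (hR : 0 ≤ R) (hL : 0 ≤ L)
    (hE : 0 < L ^ 2 - k ^ 2 / b) :
    let t₀ := k / (b * √(L ^ 2 - k ^ 2 / b)) * √R
    k * √(b * t₀ ^ 2 + R) = L * (b * t₀) := by
  have hbE : b * (L ^ 2 - k ^ 2 / b) = b * L ^ 2 - k ^ 2 := by field_simp
  show k * √(b * (k / (b * √(L ^ 2 - k ^ 2 / b)) * √R) ^ 2 + R)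
    = L * (b * (k / (b * √(L ^ 2 - k ^ 2 / b)) * √R))
  generalize L ^ 2 - k ^ 2 / b = E at hE hbE ⊢
  have hQ : b * (k / (b * √E) * √R) ^ 2 + R = (L * √R / √E) ^ 2 := by
    simp only [div_pow, mul_pow, Real.sq_sqrt hR, Real.sq_sqrt hE.le]
    field_simp
    linear_combination R * hbE
  rw [hQ, Real.sqrt_sq (by positivity)]
  field_simp

theorem stmt_4_general (n : ℕ) (σ z μ r L : ℝ) (γ u lam : Fin n → ℝ)
    (hδ : 0 < σ^2 + ∑ i, (γ i)^2 * lam i)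
    (hμr : μ > r)
    (hL : L > (μ - r) / Real.sqrt (σ^2 + ∑ i, (γ i)^2 * lam i))
    (hR : 0 < z^2 + ∑ i, (u i)^2 * lam i
      - (z*σ + ∑ i, u i * γ i * lam i)^2/(σ^2 + ∑ i, (γ i)^2 * lam i)) :
    let δ2 := σ^2 + ∑ i, (γ i)^2 * lam i
    let h : ℝ → ℝ := fun π =>
      L * Real.sqrt ((π*σ - z)^2 + ∑ i, (π * γ i - u i)^2 * lam i) - π * (μ - r)
    let π₁ := (z*σ + ∑ i, u i * γ i * lam i)/δ2
      + (μ - r) / (δ2 * Real.sqrt (L^2 - (μ - r)^2/δ2))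
        * Real.sqrt (z^2 + ∑ i, (u i)^2 * lam i - (z*σ + ∑ i, u i * γ i * lam i)^2/δ2)
    (∀ π : ℝ, h π₁ ≤ h π) ∧ (∀ π : ℝ, π ≠ π₁ → h π₁ < h π) := by
  intro δ2 h π₁
  set a := z * σ + ∑ i, u i * γ i * lam i
  set R := z ^ 2 + ∑ i, u i ^ 2 * lam i - a ^ 2 / δ2
  set t₀ := (μ - r) / (δ2 * √(L ^ 2 - (μ - r) ^ 2 / δ2)) * √R
  have hπ₁ : π₁ = a / δ2 + t₀ := rfl
  have hk : 0 < μ - r := sub_pos.mpr hμr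
  have hkL : μ - r < L * √δ2 := (div_lt_iff₀ (Real.sqrt_pos.mpr hδ)).mp hL
  have hL₀ : 0 < L := pos_of_mul_pos_left (hk.trans hkL) (Real.sqrt_nonneg _)
  have hE : 0 < L ^ 2 - (μ - r) ^ 2 / δ2 := by
    rw [sub_pos, div_lt_iff₀ hδ]
    nlinarith [Real.sq_sqrt hδ.le]
  have hshift : ∀ π, h π = L * √(δ2 * (π - a / δ2) ^ 2 + R) - (μ - r) * (π - a / δ2)
      - (μ - r) * (a / δ2) := fun π => by
    simp only [h, sq_add_sum_sq_mul_eq_quadratic, quadratic_eq_complete_square hδ.ne']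
    ring
  have hcrit := mul_sqrt_quadratic_eq_at_crit hδ hR.le hL₀.le hE
  have hstrict : ∀ π, π ≠ π₁ → h π₁ < h π := fun π hπ => by
    have := sqrt_quadratic_sub_linear_lt_of_crit hδ hR hL₀ hcrit
      (s := π - a / δ2) (by rw [hπ₁] at hπ; contrapose! hπ; linarith)
    rw [hshift, hshift, hπ₁, add_sub_cancel_left]
    linarith
  exact ⟨fun π => (eq_or_ne π π₁).elim (fun hπ => hπ ▸ le_rfl) fun hπ => (hstrict π hπ).le,
    hstrict⟩

theorem stmt_4 (n : ℕ) (σ z μ r L : ℝ) (γ u lam : Fin n → ℝ)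
    (hlam : ∀ i, 0 ≤ lam i)
    (hδ : 0 < σ^2 + ∑ i, (γ i)^2 * lam i)
    (hμr : μ > r)
    (hL : L > (μ - r) / Real.sqrt (σ^2 + ∑ i, (γ i)^2 * lam i))
    (hR : 0 < z^2 + ∑ i, (u i)^2 * lam i
      - (z*σ + ∑ i, u i * γ i * lam i)^2/(σ^2 + ∑ i, (γ i)^2 * lam i)) :
    let δ2 := σ^2 + ∑ i, (γ i)^2 * lam i
    let h : ℝ → ℝ := fun π =>
      L * Real.sqrt ((π*σ - z)^2 + ∑ i, (π * γ i - u i)^2 * lam i) - π * (μ - r)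
    let π₁ := (z*σ + ∑ i, u i * γ i * lam i)/δ2
      + (μ - r) / (δ2 * Real.sqrt (L^2 - (μ - r)^2/δ2))
        * Real.sqrt (z^2 + ∑ i, (u i)^2 * lam i - (z*σ + ∑ i, u i * γ i * lam i)^2/δ2)
    (∀ π : ℝ, h π₁ ≤ h π) ∧ (∀ π : ℝ, π ≠ π₁ → h π₁ < h π) :=
  stmt_4_general n σ z μ r L γ u lam hδ hμr hL hR
end

section
/- Let δ² > 0, μ > r, L > θ = (μ−r)/δ, and let π₁* be the optimal hedging amount. Then the optimal generator f* := π₁*(μ−r) − L·√(|π₁*σ − z|² + Σᵢ|π₁*γᵢ − uᵢ|²λᵢ) equals ((zσ + Σᵢuᵢγᵢλᵢ)/δ)·θ − √(L² − θ²)·√(z² + Σᵢuᵢ²λᵢ − (zσ + Σᵢuᵢγᵢλᵢ)²/δ²). -/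
/-!
With `A = zσ + Σᵢ uᵢγᵢλᵢ`, the quadratic form `π ↦ (πσ - z)² + Σᵢ (πγᵢ - uᵢ)²λᵢ` completes to
`δ²(π - A/δ²)² + R`. At the optimal `π₁* = A/δ² + θ√R / (δ√(L² - θ²))` this equals
`(L√R / √(L² - θ²))²`, because `θ² + (L² - θ²) = L²`. Substituting its square root, the two
multiples of `√R` in `π₁*(μ - r) - L·(…)` combine to `(θ² - L²)√R / √(L² - θ²) = -√(L² - θ²)√R`.
-/

open Finset Real

theorem sq_add_sum_sq_mul_eq {ι : Type*} (s : Finset ι) (p σ z : ℝ) (γ u lam : ι → ℝ) :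
    (p * σ - z) ^ 2 + ∑ i ∈ s, (p * γ i - u i) ^ 2 * lam i
      = p ^ 2 * (σ ^ 2 + ∑ i ∈ s, γ i ^ 2 * lam i)
        - 2 * p * (z * σ + ∑ i ∈ s, u i * γ i * lam i) + (z ^ 2 + ∑ i ∈ s, u i ^ 2 * lam i) := by
  have hsum : ∑ i ∈ s, (p * γ i - u i) ^ 2 * lam i
      = p ^ 2 * ∑ i ∈ s, γ i ^ 2 * lam i - 2 * p * ∑ i ∈ s, u i * γ i * lam i
        + ∑ i ∈ s, u i ^ 2 * lam i := by
    simp only [mul_sum, ← sum_sub_distrib, ← sum_add_distrib]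
    exact sum_congr rfl fun i _ => by ring
  rw [hsum]
  ring

theorem sq_mul_sub_two_mul_add_eq {a b c x : ℝ} (ha : a ≠ 0) :
    x ^ 2 * a - 2 * x * b + c = a * (x - b / a) ^ 2 + (c - b ^ 2 / a) := by
  field_simp
  ring

theorem mul_sub_mul_sqrt_at_optimum {δ2 m L A R p : ℝ} (hδ2 : 0 < δ2) (hL : 0 < L)
    (hmL : m ^ 2 / δ2 < L ^ 2) (hR : 0 ≤ R)
    (hp : p = A / δ2 + m / (δ2 * √(L ^ 2 - m ^ 2 / δ2)) * √R) :
    p * m - L * √(δ2 * (p - A / δ2) ^ 2 + R) = A * m / δ2 - √(L ^ 2 - m ^ 2 / δ2) * √R := by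
  set D := √(L ^ 2 - m ^ 2 / δ2)
  have hD : 0 < D := sqrt_pos.2 (sub_pos.2 hmL)
  have hD2 : D ^ 2 * δ2 = L ^ 2 * δ2 - m ^ 2 := by
    rw [sq_sqrt (sub_pos.2 hmL).le]
    field_simp
  have hR2 : √R ^ 2 = R := sq_sqrt hR
  have hquad : δ2 * (p - A / δ2) ^ 2 + R = (L * √R / D) ^ 2 := by
    rw [hp]
    field_simp
    linear_combination √R ^ 2 * hD2 - D ^ 2 * δ2 * hR2
  rw [hquad, sqrt_sq (by positivity), hp]
  field_simp
  linear_combination √R * hD2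

theorem stmt_6_general (n : ℕ) (σ z μ r L : ℝ) (γ u lam : Fin n → ℝ)
    (hδ : 0 < σ^2 + ∑ i, (γ i)^2 * lam i)
    (hμr : μ > r)
    (hL : L > (μ - r) / Real.sqrt (σ^2 + ∑ i, (γ i)^2 * lam i))
    (hR : 0 ≤ z^2 + ∑ i, (u i)^2 * lam i
      - (z*σ + ∑ i, u i * γ i * lam i)^2/(σ^2 + ∑ i, (γ i)^2 * lam i)) :
    let δ2 := σ^2 + ∑ i, (γ i)^2 * lam i
    let δ := Real.sqrt δ2
    let θ := (μ - r) / δ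
    let R := z^2 + ∑ i, (u i)^2 * lam i - (z*σ + ∑ i, u i * γ i * lam i)^2/δ2
    let π₁ := (z*σ + ∑ i, u i * γ i * lam i)/δ2
      + (μ - r) / (δ2 * Real.sqrt (L^2 - (μ - r)^2/δ2)) * Real.sqrt R
    π₁ * (μ - r)
        - L * Real.sqrt ((π₁*σ - z)^2 + ∑ i, (π₁ * γ i - u i)^2 * lam i)
      = (z*σ + ∑ i, u i * γ i * lam i)/δ * θ
        - Real.sqrt (L^2 - θ^2) * Real.sqrt R := by
  intro δ2 δ θ R π₁
  have hθ2 : θ ^ 2 = (μ - r) ^ 2 / δ2 := by rw [div_pow, sq_sqrt hδ.le]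
  have hθ : 0 < θ := div_pos (sub_pos.2 hμr) (sqrt_pos.2 hδ)
  have hAθ : (z * σ + ∑ i, u i * γ i * lam i) / δ * θ
      = (z * σ + ∑ i, u i * γ i * lam i) * (μ - r) / δ2 := by
    rw [div_mul_div_comm, mul_self_sqrt hδ.le]
  have hθL : (μ - r) ^ 2 / δ2 < L ^ 2 := hθ2 ▸ pow_lt_pow_left₀ hL hθ.le two_ne_zero
  rw [sq_add_sum_sq_mul_eq, sq_mul_sub_two_mul_add_eq hδ.ne', hAθ, hθ2]
  exact mul_sub_mul_sqrt_at_optimum hδ (hθ.trans hL) hθL hR rfl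

theorem stmt_6 (n : ℕ) (σ z μ r L : ℝ) (γ u lam : Fin n → ℝ)
    (hlam : ∀ i, 0 ≤ lam i)
    (hδ : 0 < σ^2 + ∑ i, (γ i)^2 * lam i)
    (hμr : μ > r)
    (hL : L > (μ - r) / Real.sqrt (σ^2 + ∑ i, (γ i)^2 * lam i))
    (hR : 0 ≤ z^2 + ∑ i, (u i)^2 * lam i
      - (z*σ + ∑ i, u i * γ i * lam i)^2/(σ^2 + ∑ i, (γ i)^2 * lam i)) :
    let δ2 := σ^2 + ∑ i, (γ i)^2 * lam i
    let δ := Real.sqrt δ2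
    let θ := (μ - r) / δ
    let R := z^2 + ∑ i, (u i)^2 * lam i - (z*σ + ∑ i, u i * γ i * lam i)^2/δ2
    let π₁ := (z*σ + ∑ i, u i * γ i * lam i)/δ2
      + (μ - r) / (δ2 * Real.sqrt (L^2 - (μ - r)^2/δ2)) * Real.sqrt R
    π₁ * (μ - r)
        - L * Real.sqrt ((π₁*σ - z)^2 + ∑ i, (π₁ * γ i - u i)^2 * lam i)
      = (z*σ + ∑ i, u i * γ i * lam i)/δ * θ
        - Real.sqrt (L^2 - θ^2) * Real.sqrt R :=
  stmt_6_general n σ z μ r L γ u lam hδ hμr hL hR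
end

section
/- Fix t and market parameters with δ² > 0 and L ≥ θ ≥ 0. The map (z, u₁,...,uₙ) ↦ ((zσ + Σᵢuᵢγᵢλᵢ)/δ)·θ − √(L² − θ²)·√(z² + Σᵢuᵢ²λᵢ − (zσ + Σᵢuᵢγᵢλᵢ)²/δ²) is Lipschitz continuous with respect to the norm ‖(z,u)‖² = z² + Σᵢ uᵢ²λᵢ, with Lipschitz constant depending only on bounds for σ, γ, λ, θ, L. -/
/-!
Embed `(z, u)` as `(z, u₁√λ₁, …, uₙ√λₙ)` in Euclidean space, which turns the weighted norm into the
Euclidean one, and put `w = (σ, γ₁√λ₁, …, γₙ√λₙ)`, so that `δ = ‖w‖`. The generator becomes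
`⟪v, w⟫ / ‖w‖ * θ - c * ‖v - proj_w v‖` with `c = √(L² - θ²)`. By Cauchy–Schwarz the first term is
`|θ|`-Lipschitz, and the second is `c` times the norm of the orthogonal projection onto `w⊥`, a linear
contraction, hence `c`-Lipschitz.
-/

open RealInnerProductSpace

section Generator

variable {E : Type*} [NormedAddCommGroup E] [InnerProductSpace ℝ E]

lemma norm_sub_inner_div_smul_eq_sqrt (v w : E) :
    ‖v - (⟪v, w⟫ / ‖w‖ ^ 2) • w‖ = √(‖v‖ ^ 2 - ⟪v, w⟫ ^ 2 / ‖w‖ ^ 2) := by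
  rw [← Real.sqrt_sq (norm_nonneg _), norm_sub_sq_real, real_inner_smul_right, norm_smul, mul_pow,
    Real.norm_eq_abs, sq_abs]
  rcases eq_or_ne w 0 with rfl | hw
  · simp
  · have : ‖w‖ ≠ 0 := norm_ne_zero_iff.mpr hw
    congr 1
    field_simp
    ring

lemma norm_sub_inner_div_smul_le (v w : E) : ‖v - (⟪v, w⟫ / ‖w‖ ^ 2) • w‖ ≤ ‖v‖ := by
  rw [norm_sub_inner_div_smul_eq_sqrt]
  calc _ ≤ √(‖v‖ ^ 2) := Real.sqrt_le_sqrt (sub_le_self _ (by positivity))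
    _ = ‖v‖ := Real.sqrt_sq (norm_nonneg v)

lemma lipschitzWith_one_inner_div_norm (w : E) : LipschitzWith 1 fun v : E ↦ ⟪v, w⟫ / ‖w‖ := by
  refine LipschitzWith.of_dist_le_mul fun x y ↦ ?_
  rw [Real.dist_eq, ← sub_div, ← inner_sub_left, abs_div, abs_norm, NNReal.coe_one, one_mul,
    dist_eq_norm]
  exact div_le_of_le_mul₀ (norm_nonneg _) (norm_nonneg _) (abs_real_inner_le_norm _ _)

lemma lipschitzWith_one_sqrt_norm_sq_sub_inner_sq (w : E) :
    LipschitzWith 1 fun v : E ↦ √(‖v‖ ^ 2 - ⟪v, w⟫ ^ 2 / ‖w‖ ^ 2) := by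
  refine LipschitzWith.of_dist_le_mul fun x y ↦ ?_
  rw [Real.dist_eq, ← norm_sub_inner_div_smul_eq_sqrt, ← norm_sub_inner_div_smul_eq_sqrt,
    NNReal.coe_one, one_mul, dist_eq_norm]
  calc _ ≤ ‖(x - (⟪x, w⟫ / ‖w‖ ^ 2) • w) - (y - (⟪y, w⟫ / ‖w‖ ^ 2) • w)‖ :=
        abs_norm_sub_norm_le _ _
    _ = ‖(x - y) - (⟪x - y, w⟫ / ‖w‖ ^ 2) • w‖ := by
        rw [inner_sub_left]
        congr 1
        module
    _ ≤ ‖x - y‖ := norm_sub_inner_div_smul_le _ _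

noncomputable def bsdeGenerator (w : E) (θ c : ℝ) (v : E) : ℝ :=
  ⟪v, w⟫ / ‖w‖ * θ - c * √(‖v‖ ^ 2 - ⟪v, w⟫ ^ 2 / ‖w‖ ^ 2)

lemma lipschitzWith_bsdeGenerator (w : E) (θ c : ℝ) :
    LipschitzWith (‖θ‖₊ + ‖c‖₊) (bsdeGenerator w θ c) := by
  have hdrift := (lipschitzWith_smul θ).comp (lipschitzWith_one_inner_div_norm w)
  have hpenalty := (lipschitzWith_smul c).comp (lipschitzWith_one_sqrt_norm_sq_sub_inner_sq w)
  unfold bsdeGenerator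
  simpa only [mul_one, Function.comp_def, smul_eq_mul, mul_comm θ] using hdrift.sub hpenalty

end Generator

section WeightedEmbedding

variable {n : ℕ} (lam : Fin n → ℝ)

noncomputable def weightedVec (a : ℝ) (p : Fin n → ℝ) : EuclideanSpace ℝ (Fin (n + 1)) :=
  WithLp.toLp 2 (Fin.cons a fun i ↦ p i * √(lam i))

lemma weightedVec_sub (a b : ℝ) (p q : Fin n → ℝ) :
    weightedVec lam a p - weightedVec lam b q = weightedVec lam (a - b) (p - q) := by
  ext j
  refine Fin.cases ?_ (fun i ↦ ?_) j
  · simp [weightedVec]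
  · simp [weightedVec, sub_mul]

variable {lam}

lemma inner_weightedVec (hlam : ∀ i, 0 ≤ lam i) (a b : ℝ) (p q : Fin n → ℝ) :
    ⟪weightedVec lam a p, weightedVec lam b q⟫ = a * b + ∑ i, p i * q i * lam i := by
  simp only [weightedVec, PiLp.inner_apply, RCLike.inner_apply, conj_trivial, Fin.sum_univ_succ,
    Fin.cons_zero, Fin.cons_succ]
  congr 1
  · ring
  refine Finset.sum_congr rfl fun i _ ↦ ?_
  linear_combination p i * q i * Real.mul_self_sqrt (hlam i)

lemma norm_weightedVec_sq (hlam : ∀ i, 0 ≤ lam i) (a : ℝ) (p : Fin n → ℝ) :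
    ‖weightedVec lam a p‖ ^ 2 = a ^ 2 + ∑ i, p i ^ 2 * lam i := by
  rw [← real_inner_self_eq_norm_sq, inner_weightedVec hlam]
  simp only [sq]

lemma norm_weightedVec (hlam : ∀ i, 0 ≤ lam i) (a : ℝ) (p : Fin n → ℝ) :
    ‖weightedVec lam a p‖ = √(a ^ 2 + ∑ i, p i ^ 2 * lam i) := by
  rw [← norm_weightedVec_sq hlam, Real.sqrt_sq (norm_nonneg _)]

end WeightedEmbedding

theorem stmt_7_general (n : ℕ) (σ θ L : ℝ) (γ lam : Fin n → ℝ)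
    (hlam : ∀ i, 0 ≤ lam i) :
    ∃ K : ℝ, 0 ≤ K ∧
      ∀ (z z' : ℝ) (u u' : Fin n → ℝ),
        |((z*σ + ∑ i, u i * γ i * lam i)/Real.sqrt (σ^2 + ∑ i, (γ i)^2 * lam i) * θ
            - Real.sqrt (L^2 - θ^2) * Real.sqrt (z^2 + ∑ i, (u i)^2 * lam i
                - (z*σ + ∑ i, u i * γ i * lam i)^2/(σ^2 + ∑ i, (γ i)^2 * lam i)))
          - ((z'*σ + ∑ i, u' i * γ i * lam i)/Real.sqrt (σ^2 + ∑ i, (γ i)^2 * lam i) * θ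
            - Real.sqrt (L^2 - θ^2) * Real.sqrt (z'^2 + ∑ i, (u' i)^2 * lam i
                - (z'*σ + ∑ i, u' i * γ i * lam i)^2/(σ^2 + ∑ i, (γ i)^2 * lam i)))|
        ≤ K * Real.sqrt ((z - z')^2 + ∑ i, (u i - u' i)^2 * lam i) := by
  refine ⟨(‖θ‖₊ + ‖√(L ^ 2 - θ ^ 2)‖₊ : NNReal), NNReal.coe_nonneg _, fun z z' u u' ↦ ?_⟩
  have h := (lipschitzWith_bsdeGenerator (weightedVec lam σ γ) θ √(L ^ 2 - θ ^ 2)).dist_le_mul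
    (weightedVec lam z u) (weightedVec lam z' u')
  rw [Real.dist_eq, dist_eq_norm, weightedVec_sub, norm_weightedVec hlam] at h
  simp only [bsdeGenerator, inner_weightedVec hlam, norm_weightedVec_sq hlam, Pi.sub_apply] at h
  rwa [norm_weightedVec hlam] at h

theorem stmt_7 (n : ℕ) (σ θ L : ℝ) (γ lam : Fin n → ℝ)
    (hlam : ∀ i, 0 ≤ lam i)
    (hδ : 0 < σ^2 + ∑ i, (γ i)^2 * lam i)
    (hθ : 0 ≤ θ) (hθL : θ ≤ L) :
    ∃ K : ℝ, 0 ≤ K ∧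
      ∀ (z z' : ℝ) (u u' : Fin n → ℝ),
        |((z*σ + ∑ i, u i * γ i * lam i)/Real.sqrt (σ^2 + ∑ i, (γ i)^2 * lam i) * θ
            - Real.sqrt (L^2 - θ^2) * Real.sqrt (z^2 + ∑ i, (u i)^2 * lam i
                - (z*σ + ∑ i, u i * γ i * lam i)^2/(σ^2 + ∑ i, (γ i)^2 * lam i)))
          - ((z'*σ + ∑ i, u' i * γ i * lam i)/Real.sqrt (σ^2 + ∑ i, (γ i)^2 * lam i) * θ
            - Real.sqrt (L^2 - θ^2) * Real.sqrt (z'^2 + ∑ i, (u' i)^2 * lam i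
                - (z'*σ + ∑ i, u' i * γ i * lam i)^2/(σ^2 + ∑ i, (γ i)^2 * lam i)))|
        ≤ K * Real.sqrt ((z - z')^2 + ∑ i, (u i - u' i)^2 * lam i) :=
  stmt_7_general n σ θ L γ lam hlam
end

section
/- Consider the constrained optimization problem: minimize zψ + Σᵢ uᵢφᵢλᵢ over (ψ, φ₁,...,φₙ) ∈ ℝ^{1+n} subject to ψσ + Σᵢ φᵢγᵢλᵢ = μ − r and ψ² + Σᵢ φᵢ²λᵢ ≤ L². Assume λᵢ > 0 for all i, δ² = σ² + Σᵢγᵢ²λᵢ > 0, and L > (μ−r)/δ ≥ 0. Then the minimum value equals ((zσ + Σᵢuᵢγᵢλᵢ)/δ²)(μ−r) − √(L² − (μ−r)²/δ²)·√(z² + Σᵢuᵢ²λᵢ − (zσ + Σᵢuᵢγᵢλᵢ)²/δ²). -/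
/-!
With the inner product `⟪(ψ, φ), (ψ', φ')⟫ = ψ ψ' + ∑ φᵢ φ'ᵢ λᵢ` the problem reads: minimise `⟪c, x⟫`
over the set `‖x‖² ≤ L²` intersected with the hyperplane `⟪x, a⟫ = m`, where `a = (σ, γ)`, `c = (z, u)`.
Split `x` and `c` into their components along `a` and orthogonal to `a`. On the hyperplane the component
of `x` along `a` is fixed, `(m / ‖a‖²) a`, so the orthogonal part `v` ranges over the ball of radius
`√(L² - m² / ‖a‖²)`, and `⟪c, x⟫ = ⟪c, a⟫ m / ‖a‖² + ⟪c⊥, v⟫`. By Cauchy–Schwarz the last term is at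
least `-‖c⊥‖ ‖v‖`, with equality for `v` a nonpositive multiple of `c⊥`, and
`‖c⊥‖² = ‖c‖² - ⟪c, a⟫² / ‖a‖²`.
-/

open RealInnerProductSpace

section InnerProductSpace

variable {E : Type*} [NormedAddCommGroup E] [InnerProductSpace ℝ E]

noncomputable def vecRejection (a u : E) : E := u - (⟪u, a⟫ / ‖a‖ ^ 2) • a

theorem inner_vecRejection_left (a u : E) : ⟪vecRejection a u, a⟫ = 0 := by
  rcases eq_or_ne a 0 with rfl | ha
  · simp
  have : ‖a‖ ^ 2 ≠ 0 := by positivity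
  rw [vecRejection, inner_sub_left, real_inner_smul_left, real_inner_self_eq_norm_sq]
  field_simp
  ring

theorem norm_vecRejection_sq (a u : E) :
    ‖vecRejection a u‖ ^ 2 = ‖u‖ ^ 2 - ⟪u, a⟫ ^ 2 / ‖a‖ ^ 2 := by
  rcases eq_or_ne a 0 with rfl | ha
  · simp [vecRejection]
  have : ‖a‖ ^ 2 ≠ 0 := by positivity
  rw [vecRejection, norm_sub_sq_real, real_inner_smul_right, norm_smul, mul_pow,
    Real.norm_eq_abs, sq_abs]
  field_simp
  ring

theorem inner_eq_add_inner_vecRejection (a c x : E) :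
    ⟪c, x⟫ = ⟪c, a⟫ / ‖a‖ ^ 2 * ⟪x, a⟫ + ⟪vecRejection a c, vecRejection a x⟫ := by
  have hperp : ⟪vecRejection a c, a⟫ = 0 := inner_vecRejection_left a c
  rw [show vecRejection a x = x - (⟪x, a⟫ / ‖a‖ ^ 2) • a from rfl, inner_sub_right,
    real_inner_smul_right, hperp, vecRejection, inner_sub_left, real_inner_smul_left,
    real_inner_comm a x]
  ring

theorem exists_norm_smul_le_inner_smul_eq (w : E) {r : ℝ} (hr : 0 ≤ r) :
    ∃ t : ℝ, ‖t • w‖ ≤ r ∧ ⟪w, t • w⟫ = -(r * ‖w‖) := by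
  rcases eq_or_ne w 0 with rfl | hw
  · exact ⟨0, by simpa using hr, by simp⟩
  have : ‖w‖ ≠ 0 := norm_ne_zero_iff.mpr hw
  refine ⟨-(r / ‖w‖), ?_, ?_⟩
  · rw [norm_smul, norm_neg, Real.norm_eq_abs, abs_div, abs_norm, abs_of_nonneg hr,
      div_mul_cancel₀ _ this]
  · rw [real_inner_smul_right, real_inner_self_eq_norm_sq]
    field_simp

theorem isLeast_inner_of_inner_eq_of_norm_sq_le {a : E} (c : E) {m L : ℝ} (ha : a ≠ 0)
    (hm : m ^ 2 / ‖a‖ ^ 2 ≤ L ^ 2) :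
    IsLeast ((fun x => ⟪c, x⟫) '' {x | ⟪x, a⟫ = m ∧ ‖x‖ ^ 2 ≤ L ^ 2})
      (⟪c, a⟫ / ‖a‖ ^ 2 * m
        - √(L ^ 2 - m ^ 2 / ‖a‖ ^ 2) * √(‖c‖ ^ 2 - ⟪c, a⟫ ^ 2 / ‖a‖ ^ 2)) := by
  have hs : ‖a‖ ^ 2 ≠ 0 := by positivity
  set e := L ^ 2 - m ^ 2 / ‖a‖ ^ 2
  have he : 0 ≤ e := sub_nonneg.mpr hm
  have norm_sq_eq (x : E) : ‖x‖ ^ 2 = ‖vecRejection a x‖ ^ 2 + ⟪x, a⟫ ^ 2 / ‖a‖ ^ 2 := by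
    rw [norm_vecRejection_sq]; ring
  rw [← norm_vecRejection_sq a c, Real.sqrt_sq (norm_nonneg _)]
  set w := vecRejection a c
  constructor
  · obtain ⟨t, htw, hinner⟩ := exists_norm_smul_le_inner_smul_eq w (Real.sqrt_nonneg e)
    set x := (m / ‖a‖ ^ 2) • a + t • w
    have hxa : ⟪x, a⟫ = m := by
      rw [inner_add_left, real_inner_smul_left, real_inner_smul_left, inner_vecRejection_left,
        real_inner_self_eq_norm_sq, mul_zero, add_zero, div_mul_cancel₀ _ hs]
    have hxw : vecRejection a x = t • w := by
      rw [vecRejection, hxa, add_sub_cancel_left]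
    refine ⟨x, ⟨hxa, ?_⟩, ?_⟩
    · rw [norm_sq_eq, hxw, hxa]
      have : ‖t • w‖ ^ 2 ≤ e := by
        simpa [Real.sq_sqrt he] using pow_le_pow_left₀ (norm_nonneg _) htw 2
      linarith
    · show ⟪c, x⟫ = _
      rw [inner_eq_add_inner_vecRejection a c x, hxa, hxw, hinner]
      ring
  · rintro _ ⟨x, ⟨hxa, hxL⟩, rfl⟩
    have hxw : ‖vecRejection a x‖ ≤ √e := by
      refine Real.le_sqrt_of_sq_le ?_
      have := norm_sq_eq x
      rw [hxa] at this
      linarith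
    have hcs := neg_le_of_abs_le (abs_real_inner_le_norm w (vecRejection a x))
    have := mul_le_mul_of_nonneg_left hxw (norm_nonneg w)
    show _ ≤ ⟪c, x⟫
    rw [inner_eq_add_inner_vecRejection a c x, hxa]
    linarith [mul_comm ‖w‖ √e]

end InnerProductSpace

section WeightedEmbed

variable {n : ℕ} {lam : Fin n → ℝ}

/-- Scaling the coordinates of `x` by `√(lam i)` turns the weighted inner product
`a * b + ∑ i, f i * g i * lam i` on `ℝ × ℝⁿ` into the Euclidean one. -/
noncomputable def weightedEmbed (lam : Fin n → ℝ) (x₀ : ℝ) (x : Fin n → ℝ) :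
    EuclideanSpace ℝ (Fin (n + 1)) :=
  WithLp.toLp 2 (Fin.cons x₀ fun i => √(lam i) * x i)

theorem inner_weightedEmbed (hlam : ∀ i, 0 ≤ lam i) (a b : ℝ) (f g : Fin n → ℝ) :
    ⟪weightedEmbed lam a f, weightedEmbed lam b g⟫ = a * b + ∑ i, f i * g i * lam i := by
  rw [PiLp.inner_apply, Fin.sum_univ_succ]
  simp only [weightedEmbed, Fin.cons_zero, Fin.cons_succ, Real.inner_apply]
  congr 1
  refine Finset.sum_congr rfl fun i _ => ?_
  have := Real.mul_self_sqrt (hlam i)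
  linear_combination f i * g i * this

theorem norm_weightedEmbed_sq (hlam : ∀ i, 0 ≤ lam i) (a : ℝ) (f : Fin n → ℝ) :
    ‖weightedEmbed lam a f‖ ^ 2 = a ^ 2 + ∑ i, f i ^ 2 * lam i := by
  rw [← real_inner_self_eq_norm_sq, inner_weightedEmbed hlam]
  simp only [sq]

theorem exists_weightedEmbed_eq (hlam : ∀ i, 0 < lam i) (x : EuclideanSpace ℝ (Fin (n + 1))) :
    ∃ a f, weightedEmbed lam a f = x := by
  refine ⟨x 0, fun i => x i.succ / √(lam i), ?_⟩
  ext i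
  refine Fin.cases ?_ (fun i => ?_) i
  · simp [weightedEmbed]
  · have : √(lam i) ≠ 0 := (Real.sqrt_pos.mpr (hlam i)).ne'
    simp [weightedEmbed, mul_div_cancel₀ _ this]

end WeightedEmbed

theorem stmt_8 (n : ℕ) (σ z μ r L : ℝ) (γ u lam : Fin n → ℝ)
    (hlam : ∀ i, 0 < lam i)
    (hδ : 0 < σ^2 + ∑ i, (γ i)^2 * lam i)
    (hθ : 0 ≤ (μ - r) / Real.sqrt (σ^2 + ∑ i, (γ i)^2 * lam i))
    (hL : L > (μ - r) / Real.sqrt (σ^2 + ∑ i, (γ i)^2 * lam i)) :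
    IsLeast
      {y : ℝ | ∃ (ψ : ℝ) (φ : Fin n → ℝ),
        ψ * σ + ∑ i, φ i * γ i * lam i = μ - r ∧
        ψ^2 + ∑ i, (φ i)^2 * lam i ≤ L^2 ∧
        y = z * ψ + ∑ i, u i * φ i * lam i}
      ((z*σ + ∑ i, u i * γ i * lam i)/(σ^2 + ∑ i, (γ i)^2 * lam i) * (μ - r)
        - Real.sqrt (L^2 - (μ - r)^2/(σ^2 + ∑ i, (γ i)^2 * lam i))
          * Real.sqrt (z^2 + ∑ i, (u i)^2 * lam i
              - (z*σ + ∑ i, u i * γ i * lam i)^2/(σ^2 + ∑ i, (γ i)^2 * lam i))) := by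
  have hlam₀ : ∀ i, 0 ≤ lam i := fun i => (hlam i).le
  have hA := norm_weightedEmbed_sq hlam₀ σ γ
  have hA₀ : weightedEmbed lam σ γ ≠ 0 := by
    rintro h
    rw [h, norm_zero] at hA
    linarith
  have hm : (μ - r) ^ 2 / ‖weightedEmbed lam σ γ‖ ^ 2 ≤ L ^ 2 := by
    rw [hA, ← Real.sq_sqrt hδ.le, ← div_pow]
    exact pow_le_pow_left₀ hθ hL.le 2
  have key := isLeast_inner_of_inner_eq_of_norm_sq_le (weightedEmbed lam z u) hA₀ hm
  rw [inner_weightedEmbed hlam₀ z σ u γ, norm_weightedEmbed_sq hlam₀ z u, hA] at key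
  convert key using 1
  ext y
  constructor
  · rintro ⟨ψ, φ, hcon, hnorm, rfl⟩
    refine ⟨weightedEmbed lam ψ φ, ⟨?_, ?_⟩, inner_weightedEmbed hlam₀ z ψ u φ⟩
    · rwa [inner_weightedEmbed hlam₀]
    · rwa [norm_weightedEmbed_sq hlam₀]
  · rintro ⟨x, ⟨hcon, hnorm⟩, rfl⟩
    obtain ⟨ψ, φ, rfl⟩ := exists_weightedEmbed_eq hlam x
    rw [inner_weightedEmbed hlam₀] at hcon
    rw [norm_weightedEmbed_sq hlam₀] at hnorm
    exact ⟨ψ, φ, hcon, hnorm, inner_weightedEmbed hlam₀ z ψ u φ⟩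
end

section
/- Fix an index i with λᵢ > 0 and γᵢ ≠ 0, and suppose the condition 2·((σ² + Σ_{j≠i}γⱼ²λⱼ)/δ²)·(L² − θ²) + 2·(γᵢ²λᵢ/δ²)·θ² < λᵢ holds, where δ² = σ² + Σⱼγⱼ²λⱼ > 0 and 0 ≤ θ ≤ L. Then for any z, u, u' ∈ ℝ × ℝⁿ × ℝⁿ differing only in the i-th jump component (uⱼ = u'ⱼ for j ≠ i, uᵢ ≠ u'ᵢ), the quantity Γᵢ defined by Γᵢ = (γᵢθ/δ)(uᵢ−u'ᵢ)λᵢ − √(L²−θ²)·[√(Qᵢ(u)) − √(Qᵢ(u'))], where Qᵢ(v) = |π̃(v)σ − z|² + Σⱼ|π̃(v)γⱼ − vⱼ|²λⱼ and π̃(v) = (zσ + Σⱼvⱼγⱼλⱼ)/δ², satisfies |Γᵢ| < |uᵢ − u'ᵢ|·λᵢ. -/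
/-!
Write `Δ = uᵢ - u'ᵢ` and `c = γᵢ²λᵢ/δ²`. The first term of `Γᵢ` has square `c θ² Δ² λᵢ`.
`Q v` is the squared weighted norm of the residual of `(z, v)` after projecting onto the
direction `(σ, γ)`; the residual is affine in `v`, so by the reverse triangle inequality
`(√Q u - √Q u')²` is at most the squared residual of `(0, Δ eᵢ)`, which is `(1 - c) Δ² λᵢ`.
With `(X - Y)² ≤ 2X² + 2Y²` the hypothesis on `λᵢ` then gives `Γᵢ² < Δ² λᵢ²`.
-/

open Finset Real

lemma sqrt_sub_sqrt_sq_le_of_sq_le_mul {A B S : ℝ} (hA : 0 ≤ A) (hB : 0 ≤ B)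
    (hS : S ^ 2 ≤ A * B) : (√A - √B) ^ 2 ≤ A + B - 2 * S := by
  have hS_le : S ≤ √A * √B :=
    calc S ≤ |S| := le_abs_self S
      _ = √(S ^ 2) := (sqrt_sq_eq_abs S).symm
      _ ≤ √(A * B) := sqrt_le_sqrt hS
      _ = √A * √B := sqrt_mul hA B
  nlinarith [sq_sqrt hA, sq_sqrt hB]

lemma sqrt_sq_add_sq_sub_sqrt_sq_add_sq_sq_le (x a y b : ℝ) :
    (√(x ^ 2 + a ^ 2) - √(y ^ 2 + b ^ 2)) ^ 2 ≤ (x - y) ^ 2 + (a - b) ^ 2 := by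
  have hCS : (x * y + a * b) ^ 2 ≤ (x ^ 2 + a ^ 2) * (y ^ 2 + b ^ 2) := by
    nlinarith [sq_nonneg (x * b - y * a)]
  linarith [sqrt_sub_sqrt_sq_le_of_sq_le_mul (by positivity) (by positivity) hCS]

lemma abs_sub_lt_of_sq_le_mul {X Y Δ l a b : ℝ} (hl : 0 < l) (hΔ : Δ ≠ 0)
    (hX : X ^ 2 ≤ a * (Δ ^ 2 * l)) (hY : Y ^ 2 ≤ b * (Δ ^ 2 * l)) (hab : 2 * a + 2 * b < l) :
    |X - Y| < |Δ| * l := by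
  have hpos : 0 < Δ ^ 2 * l := by positivity
  refine abs_lt_of_sq_lt_sq ?_ (by positivity)
  calc (X - Y) ^ 2 ≤ 2 * X ^ 2 + 2 * Y ^ 2 := by nlinarith [sq_nonneg (X + Y)]
    _ ≤ (2 * a + 2 * b) * (Δ ^ 2 * l) := by linarith
    _ < l * (Δ ^ 2 * l) := mul_lt_mul_of_pos_right hab hpos
    _ = (|Δ| * l) ^ 2 := by rw [mul_pow, sq_abs]; ring

section WeightedSums

variable {ι : Type*} [Fintype ι] {w : ι → ℝ}

lemma sum_sq_mul_nonneg (hw : ∀ j, 0 ≤ w j) (a : ι → ℝ) :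
    0 ≤ ∑ j, a j ^ 2 * w j :=
  sum_nonneg fun j _ => mul_nonneg (sq_nonneg _) (hw j)

lemma sqrt_wsum_sub_sqrt_wsum_sq_le (hw : ∀ j, 0 ≤ w j) (a b : ι → ℝ) :
    (√(∑ j, a j ^ 2 * w j) - √(∑ j, b j ^ 2 * w j)) ^ 2 ≤ ∑ j, (a j - b j) ^ 2 * w j := by
  have hCS : (∑ j, a j * b j * w j) ^ 2 ≤ (∑ j, a j ^ 2 * w j) * ∑ j, b j ^ 2 * w j :=
    sum_sq_le_sum_mul_sum_of_sq_le_mul _ (fun j _ => mul_nonneg (sq_nonneg _) (hw j))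
      (fun j _ => mul_nonneg (sq_nonneg _) (hw j)) (fun j _ => (by ring : _ = _).le)
  refine (sqrt_sub_sqrt_sq_le_of_sq_le_mul (sum_sq_mul_nonneg hw a) (sum_sq_mul_nonneg hw b)
    hCS).trans_eq ?_
  rw [mul_sum, ← sum_add_distrib, ← sum_sub_distrib]
  exact sum_congr rfl fun j _ => by ring

lemma sqrt_sq_add_wsum_sub_sq_le (hw : ∀ j, 0 ≤ w j) (x y : ℝ) (a b : ι → ℝ) :
    (√(x ^ 2 + ∑ j, a j ^ 2 * w j) - √(y ^ 2 + ∑ j, b j ^ 2 * w j)) ^ 2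
      ≤ (x - y) ^ 2 + ∑ j, (a j - b j) ^ 2 * w j := by
  have h := sqrt_sq_add_sq_sub_sqrt_sq_add_sq_sq_le x (√(∑ j, a j ^ 2 * w j)) y
    (√(∑ j, b j ^ 2 * w j))
  rw [sq_sqrt (sum_sq_mul_nonneg hw a), sq_sqrt (sum_sq_mul_nonneg hw b)] at h
  linarith [sqrt_wsum_sub_sqrt_wsum_sq_le hw a b]

lemma wsum_mul_sub_sq_of_eq_zero (k : ℝ) (γ d : ι → ℝ) {i : ι}
    (hd : ∀ j, j ≠ i → d j = 0) :
    ∑ j, (k * γ j - d j) ^ 2 * w j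
      = k ^ 2 * ∑ j, γ j ^ 2 * w j - (2 * k * γ i * d i - d i ^ 2) * w i := by
  rw [mul_sum, ← Fintype.sum_eq_single i (f := fun j => (2 * k * γ j * d j - d j ^ 2) * w j)
    (fun j hj => by simp [hd j hj]), ← sum_sub_distrib]
  exact sum_congr rfl fun j _ => by ring

lemma sqrt_residual_sub_sqrt_residual_sq_le (hw : ∀ j, 0 ≤ w j) (σ z : ℝ) (γ : ι → ℝ)
    (hδ : σ ^ 2 + ∑ j, γ j ^ 2 * w j ≠ 0) {i : ι} {u u' : ι → ℝ}
    (huj : ∀ j, j ≠ i → u j = u' j) :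
    let δ2 := σ ^ 2 + ∑ j, γ j ^ 2 * w j
    let πt : (ι → ℝ) → ℝ := fun v => (z * σ + ∑ j, v j * γ j * w j) / δ2
    let Q : (ι → ℝ) → ℝ := fun v => (πt v * σ - z) ^ 2 + ∑ j, (πt v * γ j - v j) ^ 2 * w j
    (√(Q u) - √(Q u')) ^ 2 ≤ (1 - γ i ^ 2 * w i / δ2) * ((u i - u' i) ^ 2 * w i) := by
  intro δ2 πt Q
  have hne : δ2 ≠ 0 := hδ
  have hd : ∀ j, j ≠ i → u j - u' j = 0 := fun j hj => sub_eq_zero.mpr (huj j hj)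
  have hπt : πt u - πt u' = (u i - u' i) * γ i * w i / δ2 := by
    show (z * σ + ∑ j, u j * γ j * w j) / δ2 - (z * σ + ∑ j, u' j * γ j * w j) / δ2 = _
    rw [div_sub_div_same, add_sub_add_left_eq_sub, ← sum_sub_distrib,
      Fintype.sum_eq_single i fun j hj => by rw [← sub_mul, ← sub_mul, hd j hj]; ring]
    ring
  refine (sqrt_sq_add_wsum_sub_sq_le hw _ _ _ _).trans_eq ?_
  rw [show πt u * σ - z - (πt u' * σ - z) = (πt u - πt u') * σ by ring,
    sum_congr rfl fun j _ => show (πt u * γ j - u j - (πt u' * γ j - u' j)) ^ 2 * w j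
      = ((πt u - πt u') * γ j - (u j - u' j)) ^ 2 * w j by ring,
    wsum_mul_sub_sq_of_eq_zero _ γ _ hd, hπt]
  field_simp
  ring

end WeightedSums

theorem stmt_13_general (n : ℕ) (σ θ L z : ℝ) (γ lam : Fin n → ℝ) (i : Fin n)
    (hlam : ∀ j, 0 ≤ lam j)
    (hδ : 0 < σ^2 + ∑ j, (γ j)^2 * lam j)
    (hθ : 0 ≤ θ) (hθL : θ ≤ L)
    (hli : 0 < lam i)
    (hcond : 2 * ((σ^2 + ∑ j ∈ Finset.univ.erase i, (γ j)^2 * lam j)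
        / (σ^2 + ∑ j, (γ j)^2 * lam j)) * (L^2 - θ^2)
      + 2 * ((γ i)^2 * lam i / (σ^2 + ∑ j, (γ j)^2 * lam j)) * θ^2 < lam i)
    (u u' : Fin n → ℝ)
    (huj : ∀ j, j ≠ i → u j = u' j) (hui : u i ≠ u' i) :
    let δ2 := σ^2 + ∑ j, (γ j)^2 * lam j
    let δ := Real.sqrt δ2
    let πt : (Fin n → ℝ) → ℝ := fun v => (z*σ + ∑ j, v j * γ j * lam j)/δ2
    let Q : (Fin n → ℝ) → ℝ := fun v =>
      (πt v * σ - z)^2 + ∑ j, (πt v * γ j - v j)^2 * lam j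
    |γ i * θ / δ * ((u i - u' i) * lam i)
        - Real.sqrt (L^2 - θ^2) * (Real.sqrt (Q u) - Real.sqrt (Q u'))|
      < |u i - u' i| * lam i := by
  intro δ2 δ πt Q
  have hδ2 : σ ^ 2 + ∑ j, γ j ^ 2 * lam j = δ2 := rfl
  set c := γ i ^ 2 * lam i / δ2
  have hcond' : 2 * (c * θ ^ 2) + 2 * ((L ^ 2 - θ ^ 2) * (1 - c)) < lam i := by
    have herase : σ ^ 2 + ∑ j ∈ univ.erase i, γ j ^ 2 * lam j = δ2 - γ i ^ 2 * lam i := by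
      rw [← hδ2, ← add_sum_erase _ _ (mem_univ i)]
      ring
    rw [hδ2, herase, sub_div, div_self hδ.ne'] at hcond
    linarith
  have hLθ : 0 ≤ L ^ 2 - θ ^ 2 := sub_nonneg.mpr (pow_le_pow_left₀ hθ hθL 2)
  have hX : (γ i * θ / δ * ((u i - u' i) * lam i)) ^ 2
      = c * θ ^ 2 * ((u i - u' i) ^ 2 * lam i) := by
    rw [show c = γ i ^ 2 * lam i / δ ^ 2 by rw [sq_sqrt hδ.le]]
    field_simp
  have hY : (√(L ^ 2 - θ ^ 2) * (√(Q u) - √(Q u'))) ^ 2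
      ≤ (L ^ 2 - θ ^ 2) * (1 - c) * ((u i - u' i) ^ 2 * lam i) := by
    rw [mul_pow, sq_sqrt hLθ, mul_assoc]
    exact mul_le_mul_of_nonneg_left
      (sqrt_residual_sub_sqrt_residual_sq_le hlam σ z γ hδ.ne' huj) hLθ
  exact abs_sub_lt_of_sq_le_mul hli (sub_ne_zero.mpr hui) hX.le hY hcond'

theorem stmt_13 (n : ℕ) (σ θ L z : ℝ) (γ lam : Fin n → ℝ) (i : Fin n)
    (hlam : ∀ j, 0 ≤ lam j)
    (hδ : 0 < σ^2 + ∑ j, (γ j)^2 * lam j)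
    (hθ : 0 ≤ θ) (hθL : θ ≤ L)
    (hli : 0 < lam i) (hγi : γ i ≠ 0)
    (hcond : 2 * ((σ^2 + ∑ j ∈ Finset.univ.erase i, (γ j)^2 * lam j)
        / (σ^2 + ∑ j, (γ j)^2 * lam j)) * (L^2 - θ^2)
      + 2 * ((γ i)^2 * lam i / (σ^2 + ∑ j, (γ j)^2 * lam j)) * θ^2 < lam i)
    (u u' : Fin n → ℝ)
    (huj : ∀ j, j ≠ i → u j = u' j) (hui : u i ≠ u' i) :
    let δ2 := σ^2 + ∑ j, (γ j)^2 * lam j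
    let δ := Real.sqrt δ2
    let πt : (Fin n → ℝ) → ℝ := fun v => (z*σ + ∑ j, v j * γ j * lam j)/δ2
    let Q : (Fin n → ℝ) → ℝ := fun v =>
      (πt v * σ - z)^2 + ∑ j, (πt v * γ j - v j)^2 * lam j
    |γ i * θ / δ * ((u i - u' i) * lam i)
        - Real.sqrt (L^2 - θ^2) * (Real.sqrt (Q u) - Real.sqrt (Q u'))|
      < |u i - u' i| * lam i :=
  stmt_13_general n σ θ L z γ lam i hlam hδ hθ hθL hli hcond u u' huj hui
end

section
/- Fix an index i with λᵢ > 0 and γᵢ = 0, and suppose ((σ² + Σ_{j≠i}γⱼ²λⱼ)/δ²)·(L² − θ²) < λᵢ with δ² = σ² + Σⱼγⱼ²λⱼ > 0 and 0 ≤ θ ≤ L. Then for u, u' differing only in coordinate i, |√(L²−θ²)·(√(Qᵢ(u)) − √(Qᵢ(u')))| < |uᵢ − u'ᵢ|·λᵢ, where Qᵢ(v) = z² + Σⱼ vⱼ²λⱼ − (zσ + Σⱼvⱼγⱼλⱼ)²/δ². -/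
/-!
Since `γᵢ = 0`, the coordinate `uᵢ` does not enter the projection term of `Q`, so
`Q(v) = vᵢ² λᵢ + R` with `R ≥ 0` (Cauchy–Schwarz) depending only on the other coordinates.
Hence `v ↦ √Q(v)` is `√λᵢ`-Lipschitz in `vᵢ`, and the hypothesis reduces to `L² − θ² < λᵢ`,
i.e. `√(L² − θ²) < √λᵢ`.
-/

open Finset

section

variable {ι : Type*} [Fintype ι]

/-- The squared `lam`-weighted norm of the component of `(z, v)` orthogonal to `(σ, γ)`, the
first coordinate carrying weight `1`. -/
noncomputable def perpSqNorm (σ z : ℝ) (γ lam v : ι → ℝ) : ℝ :=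
  z ^ 2 + ∑ j, v j ^ 2 * lam j -
    (z * σ + ∑ j, v j * γ j * lam j) ^ 2 / (σ ^ 2 + ∑ j, γ j ^ 2 * lam j)

theorem weighted_inner_sq_le {σ z : ℝ} {γ lam v : ι → ℝ} (hlam : ∀ j, 0 ≤ lam j) :
    (z * σ + ∑ j, v j * γ j * lam j) ^ 2
      ≤ (z ^ 2 + ∑ j, v j ^ 2 * lam j) * (σ ^ 2 + ∑ j, γ j ^ 2 * lam j) := by
  -- Cauchy–Schwarz over `Option ι`, the extra index `none` carrying `(z, σ)`
  simpa [Fintype.sum_option] using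
    sum_sq_le_sum_mul_sum_of_sq_le_mul (univ : Finset (Option ι))
      (r := fun j => j.elim (z * σ) fun j => v j * γ j * lam j)
      (f := fun j => j.elim (z ^ 2) fun j => v j ^ 2 * lam j)
      (g := fun j => j.elim (σ ^ 2) fun j => γ j ^ 2 * lam j)
      (by rintro (_ | j) _ <;> simp [sq_nonneg, mul_nonneg, hlam])
      (by rintro (_ | j) _ <;> simp [sq_nonneg, mul_nonneg, hlam])
      (by rintro (_ | j) _ <;> apply le_of_eq <;> simp only [Option.elim] <;> ring)

theorem perpSqNorm_nonneg {σ z : ℝ} {γ lam : ι → ℝ} (hlam : ∀ j, 0 ≤ lam j) (v : ι → ℝ) :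
    0 ≤ perpSqNorm σ z γ lam v := by
  have hsum (w : ι → ℝ) : 0 ≤ ∑ j, w j ^ 2 * lam j :=
    sum_nonneg fun j _ => mul_nonneg (sq_nonneg _) (hlam j)
  exact sub_nonneg.2 <| div_le_of_le_mul₀ (add_nonneg (sq_nonneg σ) (hsum γ))
    (add_nonneg (sq_nonneg z) (hsum v)) (weighted_inner_sq_le hlam)

theorem perpSqNorm_eq_add_update_zero [DecidableEq ι] {σ z : ℝ} {γ lam : ι → ℝ} {i : ι}
    (hγ : γ i = 0) (v : ι → ℝ) :
    perpSqNorm σ z γ lam v = v i ^ 2 * lam i + perpSqNorm σ z γ lam (Function.update v i 0) := by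
  have hsq : ∑ j, v j ^ 2 * lam j = v i ^ 2 * lam i + ∑ j, Function.update v i 0 j ^ 2 * lam j := by
    rw [Fintype.sum_eq_add_sum_compl i, Fintype.sum_eq_add_sum_compl i (fun j => _),
      Function.update_self, zero_pow two_ne_zero, zero_mul, zero_add]
    exact congrArg _ <| sum_congr rfl fun j hj => by rw [Function.update_of_ne (by simpa using hj)]
  have hinner : ∑ j, v j * γ j * lam j = ∑ j, Function.update v i 0 j * γ j * lam j := by
    refine Fintype.sum_congr _ _ fun j => ?_
    rcases eq_or_ne j i with rfl | hj
    · simp [hγ]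
    · rw [Function.update_of_ne hj]
  simp only [perpSqNorm, hsq, hinner]
  ring

end

theorem abs_sqrt_sq_add_sub_sqrt_sq_add_le {R : ℝ} (hR : 0 ≤ R) (x y : ℝ) :
    |√(x ^ 2 + R) - √(y ^ 2 + R)| ≤ |x - y| := by
  have key (x y : ℝ) : √(x ^ 2 + R) ≤ √(y ^ 2 + R) + |x - y| := by
    have hy : |y| ≤ √(y ^ 2 + R) := Real.abs_le_sqrt (by linarith)
    have hs := Real.sq_sqrt (show 0 ≤ y ^ 2 + R by positivity)
    rw [Real.sqrt_le_left (by positivity)]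
    nlinarith [abs_mul_abs_self (x - y), abs_mul (x - y) y, le_abs_self ((x - y) * y),
      abs_nonneg (x - y)]
  rw [abs_sub_le_iff]
  exact ⟨by linarith [key x y], by linarith [key y x, abs_sub_comm x y]⟩

theorem stmt_14_general (n : ℕ) (σ θ L z : ℝ) (γ lam : Fin n → ℝ) (i : Fin n)
    (hlam : ∀ j, 0 ≤ lam j)
    (hδ : 0 < σ^2 + ∑ j, (γ j)^2 * lam j)
    (hli : 0 < lam i) (hγi : γ i = 0)
    (hcond : ((σ^2 + ∑ j ∈ Finset.univ.erase i, (γ j)^2 * lam j)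
        / (σ^2 + ∑ j, (γ j)^2 * lam j)) * (L^2 - θ^2) < lam i)
    (u u' : Fin n → ℝ)
    (huj : ∀ j, j ≠ i → u j = u' j) (hui : u i ≠ u' i) :
    let δ2 := σ^2 + ∑ j, (γ j)^2 * lam j
    let Q : (Fin n → ℝ) → ℝ := fun v =>
      z^2 + ∑ j, (v j)^2 * lam j - (z*σ + ∑ j, v j * γ j * lam j)^2/δ2
    |Real.sqrt (L^2 - θ^2) * (Real.sqrt (Q u) - Real.sqrt (Q u'))|
      < |u i - u' i| * lam i := by
  intro δ2 Q
  have hm : L ^ 2 - θ ^ 2 < lam i := by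
    rwa [sum_erase _ (by simp [hγi]), div_self hδ.ne', one_mul] at hcond
  have hrest : Function.update u i 0 = Function.update u' i 0 := by
    ext j
    rcases eq_or_ne j i with rfl | hj
    · simp
    · simp [Function.update_of_ne hj, huj j hj]
  have hlip : |√(Q u) - √(Q u')| ≤ |u i - u' i| * √(lam i) := by
    have := abs_sqrt_sq_add_sub_sqrt_sq_add_le (perpSqNorm_nonneg (σ := σ) (z := z) (γ := γ) hlam
      (Function.update u i 0)) (u i * √(lam i)) (u' i * √(lam i))
    rwa [mul_pow, mul_pow, Real.sq_sqrt hli.le, ← perpSqNorm_eq_add_update_zero hγi, hrest,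
      ← perpSqNorm_eq_add_update_zero hγi, ← sub_mul, abs_mul,
      abs_of_nonneg (Real.sqrt_nonneg _)] at this
  have hd : 0 < |u i - u' i| * √(lam i) :=
    mul_pos (abs_pos.2 (sub_ne_zero.2 hui)) (Real.sqrt_pos.2 hli)
  calc |√(L ^ 2 - θ ^ 2) * (√(Q u) - √(Q u'))|
      = √(L ^ 2 - θ ^ 2) * |√(Q u) - √(Q u')| := by
        rw [abs_mul, abs_of_nonneg (Real.sqrt_nonneg _)]
    _ ≤ √(L ^ 2 - θ ^ 2) * (|u i - u' i| * √(lam i)) := by gcongr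
    _ < √(lam i) * (|u i - u' i| * √(lam i)) :=
        mul_lt_mul_of_pos_right ((Real.sqrt_lt_sqrt_iff_of_pos hli).2 hm) hd
    _ = |u i - u' i| * lam i := by rw [mul_left_comm, Real.mul_self_sqrt hli.le]

theorem stmt_14 (n : ℕ) (σ θ L z : ℝ) (γ lam : Fin n → ℝ) (i : Fin n)
    (hlam : ∀ j, 0 ≤ lam j)
    (hδ : 0 < σ^2 + ∑ j, (γ j)^2 * lam j)
    (hθ : 0 ≤ θ) (hθL : θ ≤ L)
    (hli : 0 < lam i) (hγi : γ i = 0)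
    (hcond : ((σ^2 + ∑ j ∈ Finset.univ.erase i, (γ j)^2 * lam j)
        / (σ^2 + ∑ j, (γ j)^2 * lam j)) * (L^2 - θ^2) < lam i)
    (u u' : Fin n → ℝ)
    (huj : ∀ j, j ≠ i → u j = u' j) (hui : u i ≠ u' i) :
    let δ2 := σ^2 + ∑ j, (γ j)^2 * lam j
    let Q : (Fin n → ℝ) → ℝ := fun v =>
      z^2 + ∑ j, (v j)^2 * lam j - (z*σ + ∑ j, v j * γ j * lam j)^2/δ2
    |Real.sqrt (L^2 - θ^2) * (Real.sqrt (Q u) - Real.sqrt (Q u'))|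
      < |u i - u' i| * lam i :=
  stmt_14_general n σ θ L z γ lam i hlam hδ hli hγi hcond u u' huj hui
end

section
/- Let δ² = σ² + Σᵢγᵢ²λᵢ > 0, 0 ≤ θ = (μ−r)/δ < L, and z ∈ ℝ, u ∈ ℝⁿ with R := z² + Σᵢuᵢ²λᵢ − (zσ+Σᵢuᵢγᵢλᵢ)²/δ² > 0. Define π* = (zσ+Σᵢuᵢγᵢλᵢ)/δ² + (θ/(δ√(L²−θ²)))·√R. Then the instantaneous Sharpe ratio of the surplus at π* equals L: [π*(μ−r) − f*] / √(|π*σ−z|² + Σᵢ|π*γᵢ−uᵢ|²λᵢ) = L, where f* = ((zσ+Σᵢuᵢγᵢλᵢ)/δ)θ − √(L²−θ²)·√R. -/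
/-!
The surplus variance `(πσ - z)² + Σᵢ (πγᵢ - uᵢ)² λᵢ` is a quadratic in `π` with leading
coefficient `δ²`; completing the square writes it as `δ² (π - A/δ²)² + R`, where
`A = zσ + Σᵢ uᵢγᵢλᵢ`. With `q = √(L² - θ²)` and `ρ = √R`, the optimal `π*` sits at distance
`θρ/(δq)` from the vertex, so the variance is `(θ² + q²) ρ²/q² = (Lρ/q)²`, while the excess
drift `π*(μ - r) - f*` equals `(θ² + q²) ρ/q = L²ρ/q`. Their ratio is `L`.
-/

open Finset Real

lemma sq_add_sum_weighted_sq_eq {ι R : Type*} [Fintype ι] [CommRing R] (p σ z : R)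
    (γ u w : ι → R) :
    (p * σ - z) ^ 2 + ∑ i, (p * γ i - u i) ^ 2 * w i
      = (σ ^ 2 + ∑ i, γ i ^ 2 * w i) * p ^ 2 - 2 * (z * σ + ∑ i, u i * γ i * w i) * p
        + (z ^ 2 + ∑ i, u i ^ 2 * w i) := by
  have expand : ∀ i, (p * γ i - u i) ^ 2 * w i
      = p ^ 2 * (γ i ^ 2 * w i) - 2 * p * (u i * γ i * w i) + u i ^ 2 * w i := fun i => by ring
  simp only [expand, sum_add_distrib, sum_sub_distrib, ← mul_sum]
  ring

lemma quadratic_eq_sq_add {K : Type*} [Field K] {a : K} (ha : a ≠ 0) (b c x : K) :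
    a * x ^ 2 - 2 * b * x + c = a * (x - b / a) ^ 2 + (c - b ^ 2 / a) := by
  field_simp
  ring

lemma sharpe_ratio_eq_of_optimal {δ θ L ρ A p : ℝ} (hδ : 0 < δ) (hθ : 0 ≤ θ) (hθL : θ < L)
    (hρ : 0 < ρ) (hp : p = A / δ ^ 2 + θ / (δ * √(L ^ 2 - θ ^ 2)) * ρ) :
    (p * (θ * δ) - (A / δ * θ - √(L ^ 2 - θ ^ 2) * ρ)) / √(δ ^ 2 * (p - A / δ ^ 2) ^ 2 + ρ ^ 2)
      = L := by
  set q := √(L ^ 2 - θ ^ 2)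
  have hq : 0 < q := sqrt_pos.2 (by nlinarith)
  have hq2 : q ^ 2 = L ^ 2 - θ ^ 2 := sq_sqrt (by nlinarith)
  have drift : p * (θ * δ) - (A / δ * θ - q * ρ) = L ^ 2 * ρ / q := by
    rw [hp]
    field_simp
    linear_combination δ * ρ * hq2
  have variance : δ ^ 2 * (p - A / δ ^ 2) ^ 2 + ρ ^ 2 = (L * ρ / q) ^ 2 := by
    rw [hp]
    field_simp
    linear_combination δ ^ 2 * ρ ^ 2 * hq2
  have hL : 0 < L := hθ.trans_lt hθL
  rw [drift, variance, sqrt_sq (by positivity)]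
  field_simp

theorem stmt_17_general (n : ℕ) (σ z μ r L : ℝ) (γ u lam : Fin n → ℝ)
    (hδ : 0 < σ^2 + ∑ i, (γ i)^2 * lam i)
    (hθ : 0 ≤ (μ - r) / Real.sqrt (σ^2 + ∑ i, (γ i)^2 * lam i))
    (hL : (μ - r) / Real.sqrt (σ^2 + ∑ i, (γ i)^2 * lam i) < L)
    (hR : 0 < z^2 + ∑ i, (u i)^2 * lam i
      - (z*σ + ∑ i, u i * γ i * lam i)^2/(σ^2 + ∑ i, (γ i)^2 * lam i)) :
    let δ2 := σ^2 + ∑ i, (γ i)^2 * lam i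
    let δ := Real.sqrt δ2
    let θ := (μ - r) / δ
    let R := z^2 + ∑ i, (u i)^2 * lam i - (z*σ + ∑ i, u i * γ i * lam i)^2/δ2
    let πs := (z*σ + ∑ i, u i * γ i * lam i)/δ2
      + θ / (δ * Real.sqrt (L^2 - θ^2)) * Real.sqrt R
    let f := (z*σ + ∑ i, u i * γ i * lam i)/δ * θ - Real.sqrt (L^2 - θ^2) * Real.sqrt R
    (πs * (μ - r) - f)
        / Real.sqrt ((πs * σ - z)^2 + ∑ i, (πs * γ i - u i)^2 * lam i) = L := by
  intro δ2 δ θ R πs f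
  have hδ2 : δ2 = δ ^ 2 := (sq_sqrt hδ.le).symm
  have hR' : R = √R ^ 2 := (sq_sqrt hR.le).symm
  have hδpos : 0 < δ := sqrt_pos.2 hδ
  have hμr : μ - r = θ * δ := (div_mul_cancel₀ _ hδpos.ne').symm
  rw [sq_add_sum_weighted_sq_eq, quadratic_eq_sq_add hδ.ne', hμr]
  change (πs * (θ * δ) - f) / √(δ2 * (πs - _ / δ2) ^ 2 + R) = L
  rw [hR', hδ2]
  exact sharpe_ratio_eq_of_optimal hδpos hθ hL (sqrt_pos.2 hR) (by rw [← hδ2])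

theorem stmt_17 (n : ℕ) (σ z μ r L : ℝ) (γ u lam : Fin n → ℝ)
    (hlam : ∀ i, 0 ≤ lam i)
    (hδ : 0 < σ^2 + ∑ i, (γ i)^2 * lam i)
    (hθ : 0 ≤ (μ - r) / Real.sqrt (σ^2 + ∑ i, (γ i)^2 * lam i))
    (hL : (μ - r) / Real.sqrt (σ^2 + ∑ i, (γ i)^2 * lam i) < L)
    (hR : 0 < z^2 + ∑ i, (u i)^2 * lam i
      - (z*σ + ∑ i, u i * γ i * lam i)^2/(σ^2 + ∑ i, (γ i)^2 * lam i)) :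
    let δ2 := σ^2 + ∑ i, (γ i)^2 * lam i
    let δ := Real.sqrt δ2
    let θ := (μ - r) / δ
    let R := z^2 + ∑ i, (u i)^2 * lam i - (z*σ + ∑ i, u i * γ i * lam i)^2/δ2
    let πs := (z*σ + ∑ i, u i * γ i * lam i)/δ2
      + θ / (δ * Real.sqrt (L^2 - θ^2)) * Real.sqrt R
    let f := (z*σ + ∑ i, u i * γ i * lam i)/δ * θ - Real.sqrt (L^2 - θ^2) * Real.sqrt R
    (πs * (μ - r) - f)
        / Real.sqrt ((πs * σ - z)^2 + ∑ i, (πs * γ i - u i)^2 * lam i) = L :=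
  stmt_17_general n σ z μ r L γ u lam hδ hθ hL hR
end

section
/- Under the assumptions δ² > 0, μ > r, L > θ = (μ−r)/δ and R := z² + Σᵢuᵢ²λᵢ − (zσ+Σᵢuᵢγᵢλᵢ)²/δ² > 0, the minimum value of h(π) = L√(|πσ−z|²+Σᵢ|πγᵢ−uᵢ|²λᵢ) − π(μ−r) over π ∈ ℝ equals √(L²−θ²)·√R − π̃(μ−r), where π̃ = (zσ+Σᵢuᵢγᵢλᵢ)/δ². -/
/-!
Completing the square writes the radicand as `δ² (π - π̃)² + R`, so after the substitution
`y = δ (π - π̃)` the objective becomes `L √(y² + R) - θ y - π̃ (μ - r)`. Cauchy–Schwarz for the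
vectors `(θ, √(L² - θ²))`, of length `L`, and `(y, √R)` gives
`θ y + √(L² - θ²) √R ≤ L √(y² + R)`, with equality when the two vectors are proportional.
-/

open Finset

lemma sq_sub_add_sum_weighted_sq_sub_eq {ι : Type*} [Fintype ι] (σ z x : ℝ) (γ u w : ι → ℝ)
    (hδ : σ ^ 2 + ∑ i, γ i ^ 2 * w i ≠ 0) :
    (x * σ - z) ^ 2 + ∑ i, (x * γ i - u i) ^ 2 * w i =
      (σ ^ 2 + ∑ i, γ i ^ 2 * w i) *
          (x - (z * σ + ∑ i, u i * γ i * w i) / (σ ^ 2 + ∑ i, γ i ^ 2 * w i)) ^ 2 +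
        (z ^ 2 + ∑ i, u i ^ 2 * w i -
          (z * σ + ∑ i, u i * γ i * w i) ^ 2 / (σ ^ 2 + ∑ i, γ i ^ 2 * w i)) := by
  have hexpand : ∑ i, (x * γ i - u i) ^ 2 * w i =
      x ^ 2 * ∑ i, γ i ^ 2 * w i - 2 * x * ∑ i, u i * γ i * w i + ∑ i, u i ^ 2 * w i := by
    simp only [mul_sum, ← sum_sub_distrib, ← sum_add_distrib]
    exact sum_congr rfl fun i _ => by ring
  rw [hexpand]
  field_simp
  ring

lemma mul_add_sqrt_sq_sub_sq_mul_sqrt_le {θ L y R : ℝ} (hθL : |θ| < L) (hR : 0 ≤ R) :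
    θ * y + √(L ^ 2 - θ ^ 2) * √R ≤ L * √(y ^ 2 + R) := by
  have hc : √(L ^ 2 - θ ^ 2) ^ 2 = L ^ 2 - θ ^ 2 :=
    Real.sq_sqrt (sub_nonneg.2 (sq_le_sq.2 (hθL.le.trans (le_abs_self L))))
  have hs : √R ^ 2 = R := Real.sq_sqrt hR
  have hL : 0 ≤ L := (abs_nonneg θ).trans hθL.le
  have hcs : (θ * y + √(L ^ 2 - θ ^ 2) * √R) ^ 2 ≤ L ^ 2 * (y ^ 2 + R) := by
    nlinarith [sq_nonneg (θ * √R - √(L ^ 2 - θ ^ 2) * y)]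
  calc θ * y + √(L ^ 2 - θ ^ 2) * √R ≤ √(L ^ 2 * (y ^ 2 + R)) := Real.le_sqrt_of_sq_le hcs
    _ = L * √(y ^ 2 + R) := by rw [Real.sqrt_mul (sq_nonneg L), Real.sqrt_sq hL]

lemma isLeast_range_mul_sqrt_sq_add_sub_mul {θ L R : ℝ} (hθL : |θ| < L) (hR : 0 ≤ R) :
    IsLeast (Set.range fun y : ℝ => L * √(y ^ 2 + R) - θ * y) (√(L ^ 2 - θ ^ 2) * √R) := by
  refine ⟨?_, ?_⟩
  · have hθL2 : 0 < L ^ 2 - θ ^ 2 := sub_pos.2 (sq_lt_sq.2 (hθL.trans_le (le_abs_self L)))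
    have hc : 0 < √(L ^ 2 - θ ^ 2) := Real.sqrt_pos.2 hθL2
    set c := √(L ^ 2 - θ ^ 2)
    have hc2 : c ^ 2 = L ^ 2 - θ ^ 2 := Real.sq_sqrt hθL2.le
    have hL : 0 ≤ L := (abs_nonneg θ).trans hθL.le
    refine ⟨θ * √R / c, ?_⟩
    have hroot : √((θ * √R / c) ^ 2 + R) = L * √R / c := by
      rw [Real.sqrt_eq_iff_eq_sq (by positivity) (by positivity)]
      field_simp
      nlinarith [Real.sq_sqrt hR]
    simp only [hroot]
    field_simp
    linear_combination (-√R) * hc2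
  · rintro _ ⟨y, rfl⟩
    linarith [mul_add_sqrt_sq_sub_sq_mul_sqrt_le (y := y) hθL hR]

theorem stmt_19_general (n : ℕ) (σ z μ r L : ℝ) (γ u lam : Fin n → ℝ)
    (hδ : 0 < σ^2 + ∑ i, (γ i)^2 * lam i)
    (hμr : μ > r)
    (hL : L > (μ - r) / Real.sqrt (σ^2 + ∑ i, (γ i)^2 * lam i))
    (hR : 0 < z^2 + ∑ i, (u i)^2 * lam i
      - (z*σ + ∑ i, u i * γ i * lam i)^2/(σ^2 + ∑ i, (γ i)^2 * lam i)) :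
    let δ2 := σ^2 + ∑ i, (γ i)^2 * lam i
    let θ := (μ - r) / Real.sqrt δ2
    let R := z^2 + ∑ i, (u i)^2 * lam i - (z*σ + ∑ i, u i * γ i * lam i)^2/δ2
    let πt := (z*σ + ∑ i, u i * γ i * lam i)/δ2
    IsLeast
      (Set.range (fun π : ℝ =>
        L * Real.sqrt ((π*σ - z)^2 + ∑ i, (π * γ i - u i)^2 * lam i) - π * (μ - r)))
      (Real.sqrt (L^2 - θ^2) * Real.sqrt R - πt * (μ - r)) := by
  intro δ2 θ R πt
  have hδ' : 0 < √δ2 := Real.sqrt_pos.2 hδ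
  have hθ : |θ| < L := by
    rwa [abs_of_pos (div_pos (sub_pos.2 hμr) hδ')]
  have hθδ : θ * √δ2 = μ - r := div_mul_cancel₀ _ hδ'.ne'
  have hobj : (fun π : ℝ => L * √((π*σ - z)^2 + ∑ i, (π * γ i - u i)^2 * lam i) - π * (μ - r)) =
      (· - πt * (μ - r)) ∘ (fun y : ℝ => L * √(y ^ 2 + R) - θ * y) ∘ (fun π => √δ2 * (π - πt)) := by
    funext π
    have hquad : (π*σ - z)^2 + ∑ i, (π * γ i - u i)^2 * lam i = (√δ2 * (π - πt)) ^ 2 + R := by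
      rw [mul_pow, Real.sq_sqrt hδ.le]
      exact sq_sub_add_sum_weighted_sq_sub_eq σ z π γ u lam hδ.ne'
    simp only [Function.comp, hquad]
    linear_combination (π - πt) * hθδ
  have hsurj : Function.Surjective fun π => √δ2 * (π - πt) := fun y =>
    ⟨y / √δ2 + πt, by field_simp; ring⟩
  rw [hobj, Set.range_comp, hsurj.range_comp]
  exact Monotone.map_isLeast (fun _ _ h => sub_le_sub_right h _)
    (isLeast_range_mul_sqrt_sq_add_sub_mul hθ hR.le)

theorem stmt_19 (n : ℕ) (σ z μ r L : ℝ) (γ u lam : Fin n → ℝ)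
    (hlam : ∀ i, 0 ≤ lam i)
    (hδ : 0 < σ^2 + ∑ i, (γ i)^2 * lam i)
    (hμr : μ > r)
    (hL : L > (μ - r) / Real.sqrt (σ^2 + ∑ i, (γ i)^2 * lam i))
    (hR : 0 < z^2 + ∑ i, (u i)^2 * lam i
      - (z*σ + ∑ i, u i * γ i * lam i)^2/(σ^2 + ∑ i, (γ i)^2 * lam i)) :
    let δ2 := σ^2 + ∑ i, (γ i)^2 * lam i
    let θ := (μ - r) / Real.sqrt δ2
    let R := z^2 + ∑ i, (u i)^2 * lam i - (z*σ + ∑ i, u i * γ i * lam i)^2/δ2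
    let πt := (z*σ + ∑ i, u i * γ i * lam i)/δ2
    IsLeast
      (Set.range (fun π : ℝ =>
        L * Real.sqrt ((π*σ - z)^2 + ∑ i, (π * γ i - u i)^2 * lam i) - π * (μ - r)))
      (Real.sqrt (L^2 - θ^2) * Real.sqrt R - πt * (μ - r)) :=
  stmt_19_general n σ z μ r L γ u lam hδ hμr hL hR
end
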